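/- Let S be a decision rule system with n(S) > 0 and let S′ = R_SR(S). Then max{d(S′), β_ESR(S′)} ≤ h_ESR(S) ≤ d(S′)·β_ESR⁺(S′). -/

import Mathlib

/- Common formal framework for decision rule systems and decision trees /
   acyclic decision graphs, following Durdymyradov & Moshkov. -/

attribute [local instance] Classical.propDecidable

noncomputable section

namespace DRS

/-- A decision rule `(a_{i₁}=δ₁) ∧ ⋯ ∧ (a_{i_m}=δ_m) → σ`:
`K` is the finite set of equations (attribute index, value), `rhs` is σ. -/
structure Rule where
  K : Finset (ℕ × ℕ)
  rhs : ℕ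

/-- Well-formedness of a rule: the attributes on its left-hand side are pairwise different. -/
def Rule.WF (r : Rule) : Prop := ∀ p ∈ r.K, ∀ q ∈ r.K, p.1 = q.1 → p = q

/-- A(r): the set of attributes of a rule. -/
def Rule.attrs (r : Rule) : Finset ℕ := r.K.image Prod.fst

/-- The length m of a rule. -/
def Rule.len (r : Rule) : ℕ := r.K.card

/-- A(S) -/
def attrs (S : Finset Rule) : Finset ℕ := S.biUnion Rule.attrs

/-- n(S) -/
def nPar (S : Finset Rule) : ℕ := (attrs S).card

/-- d(S): the maximum length of a rule of S. -/
def dPar (S : Finset Rule) : ℕ := S.sup Rule.len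

/-- D(S): the set of right-hand sides. -/
def rhsSet (S : Finset Rule) : Finset ℕ := S.image Rule.rhs

/-- V_S(a_i) -/
def VS (S : Finset Rule) (i : ℕ) : Finset ℕ :=
  ((S.biUnion Rule.K).filter fun p => p.1 = i).image Prod.snd

/-- k(S) -/
def kPar (S : Finset Rule) : ℕ := (attrs S).sup fun i => (VS S i).card

/-- Attribute values in trees are `Option ℕ`; `none` plays the role of the special value `*`.
`allowed S false i` is (the lift of) `V_S(a_i)`, and `allowed S true i` is `EV_S(a_i)`. -/
def allowed (S : Finset Rule) (ext : Bool) (i : ℕ) : Finset (Option ℕ) :=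
  (VS S i).image some ∪ (if ext then {none} else ∅)

/-- Consistency of an equation system over ω ∪ {*}. -/
def ConsistentE (E : Finset (ℕ × Option ℕ)) : Prop :=
  ∀ p ∈ E, ∀ q ∈ E, p.1 = q.1 → p.2 = q.2

/-- Lift the left-hand side of a rule to an equation system over ω ∪ {*}. -/
def liftK (K : Finset (ℕ × ℕ)) : Finset (ℕ × Option ℕ) :=
  K.image fun p => (p.1, some p.2)

/-- A finite directed labeled graph: the nodes are `0, …, n-1`, with a distinguished root,
each node carries either an attribute (working node) or a set of rules (terminal node),
and edges are labeled with elements of ω ∪ {*}. -/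
structure DGraph where
  n : ℕ
  root : ℕ
  label : ℕ → ℕ ⊕ Finset Rule
  edges : Finset (ℕ × Option ℕ × ℕ)

namespace DGraph

def step (G : DGraph) (u v : ℕ) : Prop := ∃ l, (u, l, v) ∈ G.edges

/-- The graph has no directed cycles. -/
def Acyclic (G : DGraph) : Prop := ∀ v, ¬ Relation.TransGen G.step v v

/-- A node is terminal if no edge leaves it. -/
def IsTerminal (G : DGraph) (v : ℕ) : Prop := ∀ e ∈ G.edges, e.1 ≠ v

/-- The set of rules attached to a (terminal) node. -/
def termSet (G : DGraph) (v : ℕ) : Finset Rule :=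
  Sum.elim (fun _ => (∅ : Finset Rule)) id (G.label v)

/-- `G` is an acyclic decision graph over the rule system `S`;
`ext = false` : branching over `V_S` (o-type), `ext = true` : branching over `EV_S` (e-type).
Terminal nodes are labeled with subsets of S; each working node is labeled with an
attribute `a` of `A(S)` and has exactly one leaving edge for every element of
`V_S(a)` (resp. `EV_S(a)`), the edges leaving it being labeled with these
pairwise different elements. -/
def IsDG (G : DGraph) (S : Finset Rule) (ext : Bool) : Prop :=
  G.root < G.n ∧
  (∀ e ∈ G.edges, e.1 < G.n ∧ e.2.2 < G.n) ∧
  G.Acyclic ∧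
  (∀ v < G.n,
    if G.IsTerminal v then
      ∃ Z : Finset Rule, G.label v = Sum.inr Z ∧ Z ⊆ S
    else
      ∃ a : ℕ, G.label v = Sum.inl a ∧ a ∈ attrs S ∧
        (∀ l : Option ℕ, (∃ w, (v, l, w) ∈ G.edges) ↔ l ∈ allowed S ext a) ∧
        (∀ l w w', (v, l, w) ∈ G.edges → (v, l, w') ∈ G.edges → w = w'))

/-- `G` is a finite directed tree with root: the root has no entering edge and every
other node has exactly one entering edge (together with acyclicity this makes the
graph a rooted tree). -/
def IsTree (G : DGraph) : Prop :=
  (∀ e ∈ G.edges, e.2.2 ≠ G.root) ∧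
  (∀ v < G.n, v ≠ G.root → ∃! e, e ∈ G.edges ∧ e.2.2 = v)

/-- `chainFrom G v p t`: the list `p` of (node, leaving-edge-label) pairs forms a
directed path in `G` starting at `v` and ending at `t`. -/
def chainFrom (G : DGraph) : ℕ → List (ℕ × Option ℕ) → ℕ → Prop
  | v, [], t => v = t
  | v, e :: rest, t => e.1 = v ∧ ∃ w, (v, e.2, w) ∈ G.edges ∧ chainFrom G w rest t

/-- A complete path: from the root to a terminal node; it is recorded by the list of
its working nodes with the labels of the edges taken, together with its terminal node. -/
def IsCompletePath (G : DGraph) (p : List (ℕ × Option ℕ)) (t : ℕ) : Prop :=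
  G.chainFrom G.root p t ∧ G.IsTerminal t ∧ t < G.n

/-- K(ξ): the equation system associated with a complete path. -/
def pathEqs (G : DGraph) (p : List (ℕ × Option ℕ)) : Finset (ℕ × Option ℕ) :=
  (p.filterMap fun e =>
    Sum.elim (fun a => some (a, e.2)) (fun _ => none) (G.label e.1)).toFinset

/-- L(Γ): the number of nodes. -/
def size (G : DGraph) : ℕ := G.n

/-- T(Γ): the number of terminal nodes labeled with pairwise different sets of rules. -/
def tCount (G : DGraph) : ℕ :=
  (((Finset.range G.n).filter fun v => G.IsTerminal v).image fun v => G.termSet v).card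

/-- h(Γ): the maximum number of working nodes on a complete path. -/
def depth (G : DGraph) : ℕ :=
  sSup {m | ∃ p t, G.IsCompletePath p t ∧ p.length = m}

/-- Path conditions for (the solutions of) the problems All Rules / EAll Rules. -/
def SolvesAR (G : DGraph) (S : Finset Rule) : Prop :=
  ∀ p t, G.IsCompletePath p t → ConsistentE (G.pathEqs p) →
    (∀ r ∈ G.termSet t, liftK r.K ⊆ G.pathEqs p) ∧
    (∀ r ∈ S, r ∉ G.termSet t → ¬ ConsistentE (liftK r.K ∪ G.pathEqs p))

/-- Path conditions for the problems All Decisions / EAll Decisions. -/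
def SolvesAD (G : DGraph) (S : Finset Rule) : Prop :=
  ∀ p t, G.IsCompletePath p t → ConsistentE (G.pathEqs p) →
    (∀ r ∈ G.termSet t, liftK r.K ⊆ G.pathEqs p) ∧
    (∀ r ∈ S, r ∉ G.termSet t → r.rhs ∉ (G.termSet t).image Rule.rhs →
      ¬ ConsistentE (liftK r.K ∪ G.pathEqs p))

/-- Path conditions for the problems Some Rules / ESome Rules. -/
def SolvesSR (G : DGraph) (S : Finset Rule) : Prop :=
  ∀ p t, G.IsCompletePath p t → ConsistentE (G.pathEqs p) →
    (∀ r ∈ G.termSet t, liftK r.K ⊆ G.pathEqs p) ∧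
    (G.termSet t = ∅ → ∀ r ∈ S, ¬ ConsistentE (liftK r.K ∪ G.pathEqs p))

end DGraph

/-- Γ is a decision tree over S solving AR(S) (an o-tree). -/
def TreeSolvesAR (S : Finset Rule) (G : DGraph) : Prop :=
  G.IsDG S false ∧ G.IsTree ∧ G.SolvesAR S
/-- Γ is a decision tree over S solving EAR(S) (an e-tree). -/
def TreeSolvesEAR (S : Finset Rule) (G : DGraph) : Prop :=
  G.IsDG S true ∧ G.IsTree ∧ G.SolvesAR S
/-- Γ is a decision tree over S solving AD(S) (an o-tree). -/
def TreeSolvesAD (S : Finset Rule) (G : DGraph) : Prop :=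
  G.IsDG S false ∧ G.IsTree ∧ G.SolvesAD S
/-- Γ is a decision tree over S solving EAD(S) (an e-tree). -/
def TreeSolvesEAD (S : Finset Rule) (G : DGraph) : Prop :=
  G.IsDG S true ∧ G.IsTree ∧ G.SolvesAD S
/-- Γ is a decision tree over S solving SR(S) (an o-tree). -/
def TreeSolvesSR (S : Finset Rule) (G : DGraph) : Prop :=
  G.IsDG S false ∧ G.IsTree ∧ G.SolvesSR S
/-- Γ is a decision tree over S solving ESR(S) (an e-tree). -/
def TreeSolvesESR (S : Finset Rule) (G : DGraph) : Prop :=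
  G.IsDG S true ∧ G.IsTree ∧ G.SolvesSR S

/-- L_AR(S): minimum number of nodes of a decision tree over S solving AR(S). -/
def L_AR (S : Finset Rule) : ℕ := sInf {m | ∃ G : DGraph, TreeSolvesAR S G ∧ G.size = m}
def L_EAR (S : Finset Rule) : ℕ := sInf {m | ∃ G : DGraph, TreeSolvesEAR S G ∧ G.size = m}
def L_AD (S : Finset Rule) : ℕ := sInf {m | ∃ G : DGraph, TreeSolvesAD S G ∧ G.size = m}
def L_EAD (S : Finset Rule) : ℕ := sInf {m | ∃ G : DGraph, TreeSolvesEAD S G ∧ G.size = m}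
def L_SR (S : Finset Rule) : ℕ := sInf {m | ∃ G : DGraph, TreeSolvesSR S G ∧ G.size = m}
def L_ESR (S : Finset Rule) : ℕ := sInf {m | ∃ G : DGraph, TreeSolvesESR S G ∧ G.size = m}

/-- T_AR(S): minimum number of differently-labeled terminal nodes of a decision tree
over S solving AR(S); similarly for the other problems. -/
def T_AR (S : Finset Rule) : ℕ := sInf {m | ∃ G : DGraph, TreeSolvesAR S G ∧ G.tCount = m}
def T_EAR (S : Finset Rule) : ℕ := sInf {m | ∃ G : DGraph, TreeSolvesEAR S G ∧ G.tCount = m}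
def T_AD (S : Finset Rule) : ℕ := sInf {m | ∃ G : DGraph, TreeSolvesAD S G ∧ G.tCount = m}
def T_EAD (S : Finset Rule) : ℕ := sInf {m | ∃ G : DGraph, TreeSolvesEAD S G ∧ G.tCount = m}
def T_SR (S : Finset Rule) : ℕ := sInf {m | ∃ G : DGraph, TreeSolvesSR S G ∧ G.tCount = m}
def T_ESR (S : Finset Rule) : ℕ := sInf {m | ∃ G : DGraph, TreeSolvesESR S G ∧ G.tCount = m}

/-- h_AR(S): minimum depth of a decision tree over S solving AR(S); similarly for the others. -/
def h_AR (S : Finset Rule) : ℕ := sInf {m | ∃ G : DGraph, TreeSolvesAR S G ∧ G.depth = m}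
def h_EAR (S : Finset Rule) : ℕ := sInf {m | ∃ G : DGraph, TreeSolvesEAR S G ∧ G.depth = m}
def h_AD (S : Finset Rule) : ℕ := sInf {m | ∃ G : DGraph, TreeSolvesAD S G ∧ G.depth = m}
def h_EAD (S : Finset Rule) : ℕ := sInf {m | ∃ G : DGraph, TreeSolvesEAD S G ∧ G.depth = m}
def h_SR (S : Finset Rule) : ℕ := sInf {m | ∃ G : DGraph, TreeSolvesSR S G ∧ G.depth = m}
def h_ESR (S : Finset Rule) : ℕ := sInf {m | ∃ G : DGraph, TreeSolvesESR S G ∧ G.depth = m}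

/-- L^DG_SR(S): minimum number of nodes of an acyclic decision graph solving SR(S). -/
def LDG_SR (S : Finset Rule) : ℕ :=
  sInf {m | ∃ G : DGraph, G.IsDG S false ∧ G.SolvesSR S ∧ G.size = m}
/-- L^DG_ESR(S): minimum number of nodes of an acyclic decision graph solving ESR(S). -/
def LDG_ESR (S : Finset Rule) : ℕ :=
  sInf {m | ∃ G : DGraph, G.IsDG S true ∧ G.SolvesSR S ∧ G.size = m}

/-- A node cover of the hypergraph G(S). -/
def IsNodeCover (S : Finset Rule) (B : Finset ℕ) : Prop :=
  B ⊆ attrs S ∧ ∀ r ∈ S, (Rule.attrs r).Nonempty → (Rule.attrs r ∩ B).Nonempty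

/-- β(S): the minimum cardinality of a node cover of the hypergraph G(S). -/
def beta (S : Finset Rule) : ℕ := sInf {c | ∃ B, IsNodeCover S B ∧ B.card = c}

/-- S⁺: the subsystem of S consisting of all rules of length d(S). -/
def Splus (S : Finset Rule) : Finset Rule := S.filter fun r => r.len = dPar S

/-- β⁺(S) = β(S⁺). -/
def betaPlus (S : Finset Rule) : ℕ := beta (Splus S)

/-- The rule r_α : delete from the left-hand side of r all equations belonging to α. -/
def Rule.restrict (r : Rule) (α : Finset (ℕ × Option ℕ)) : Rule :=
  ⟨r.K.filter fun p => (p.1, some p.2) ∉ α, r.rhs⟩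

/-- S_α : the system of the rules r_α for all r ∈ S with K(r) ∪ α consistent. -/
def restrict (S : Finset Rule) (α : Finset (ℕ × Option ℕ)) : Finset Rule :=
  (S.filter fun r => ConsistentE (liftK r.K ∪ α)).image fun r => r.restrict α

/-- E_C(S): consistent equation systems whose attributes are in A(S) and whose
values belong to V_S (ext = false) resp. EV_S (ext = true). -/
def ESys (S : Finset Rule) (ext : Bool) : Set (Finset (ℕ × Option ℕ)) :=
  {α | ConsistentE α ∧ ∀ p ∈ α, p.1 ∈ attrs S ∧ p.2 ∈ allowed S ext p.1}

/-- I_SR(S). -/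
def I_SR (S : Finset Rule) : Finset Rule :=
  if ∃ r ∈ S, r.len = 0 then S.filter fun r => r.len = 0 else S

/-- D₀(S): the right-hand sides of the rules of S of length 0. -/
def D0 (S : Finset Rule) : Finset ℕ := (S.filter fun r => r.len = 0).image Rule.rhs

/-- I_AD(S). -/
def I_AD (S : Finset Rule) : Finset Rule :=
  S.filter fun r => r.len = 0 ∨ r.rhs ∉ D0 S

def betaC (S : Finset Rule) (ext : Bool) : ℕ :=
  sSup {b | ∃ α ∈ ESys S ext, beta (restrict S α) = b}
def betaCplus (S : Finset Rule) (ext : Bool) : ℕ :=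
  sSup {b | ∃ α ∈ ESys S ext, betaPlus (restrict S α) = b}
def betaI (S : Finset Rule) (I : Finset Rule → Finset Rule) : ℕ :=
  sSup {b | ∃ α ∈ ESys S true, beta (I (restrict S α)) = b}
def betaIplus (S : Finset Rule) (I : Finset Rule → Finset Rule) : ℕ :=
  sSup {b | ∃ α ∈ ESys S true, betaPlus (I (restrict S α)) = b}

def beta_AR (S : Finset Rule) : ℕ := betaC S false
def beta_AD (S : Finset Rule) : ℕ := betaC S false
def beta_SR (S : Finset Rule) : ℕ := betaC S false
def beta_EAR (S : Finset Rule) : ℕ := betaC S true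
def beta_ARplus (S : Finset Rule) : ℕ := betaCplus S false
def beta_ADplus (S : Finset Rule) : ℕ := betaCplus S false
def beta_SRplus (S : Finset Rule) : ℕ := betaCplus S false
def beta_EARplus (S : Finset Rule) : ℕ := betaCplus S true
def beta_EAD (S : Finset Rule) : ℕ := betaI S I_AD
def beta_EADplus (S : Finset Rule) : ℕ := betaIplus S I_AD
def beta_ESR (S : Finset Rule) : ℕ := betaI S I_SR
def beta_ESRplus (S : Finset Rule) : ℕ := betaIplus S I_SR

/-- R_SR(S). -/
def R_SR (S : Finset Rule) : Finset Rule :=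
  S.filter fun r => ¬ ∃ r' ∈ S, r'.K ⊂ r.K

/-- R_AD(S). -/
def R_AD (S : Finset Rule) : Finset Rule :=
  S.filter fun r => ¬ ∃ r' ∈ S, r'.K ⊂ r.K ∧ r'.rhs = r.rhs

/-- A reduced decision rule system. -/
def Reduced (S : Finset Rule) : Prop :=
  attrs S ⊆ Finset.range (nPar S + 1) ∧
  rhsSet S ⊆ Finset.range ((rhsSet S).card + 1) ∧
  (∀ i ∈ attrs S, VS S i ⊆ Finset.range (kPar S + 1)) ∧
  1 ≤ dPar S

/-- Length of the binary representation of a natural number. -/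
def bitLen (m : ℕ) : ℕ := max 1 (Nat.size m)

/-- The length of the word "(a⟨i⟩=⟨δ⟩)" encoding one equation. -/
def eqLen (p : ℕ × ℕ) : ℕ := 4 + bitLen p.1 + bitLen p.2

/-- The length of the word encoding one rule (with the "∧" signs and "→"). -/
def Rule.wordLen (r : Rule) : ℕ :=
  (∑ p ∈ r.K, eqLen p) + (r.K.card - 1) + 1 + bitLen r.rhs

/-- size(S): the length of the word representing S (with ";" separating the rules). -/
def sizeS (S : Finset Rule) : ℕ := (∑ r ∈ S, r.wordLen) + (S.card - 1)

/-!
Lower bounds. Follow a tree solving ESR(S) along the answers of a longest rule `r` of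
`R_SR S`, answering `*` elsewhere. A rule recognized at the end of this path has its left-hand
side inside `K(r)`, hence equal to `K(r)` by minimality, so the path asks all `d(R_SR S)`
attributes of `r`. Along the answers of some `α` (and `*` elsewhere), a recognized rule would
reduce a rule of `(R_SR S)_α` to length `0`; otherwise every rule is refuted, and the
attributes answered by `*` form a node cover of `G((R_SR S)_α)`.

Upper bound. While `(R_SR S)_α` is nonempty and has no rule of length `0`, ask all attributes
of a minimum node cover of its longest rules. A round costs at most `β_ESR⁺(R_SR S)` queries,
since `α` can be normalized into `E_ESR(R_SR S)`, and lowers `d((R_SR S)_α)`, so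
`d(R_SR S)` rounds suffice.
-/

lemma ConsistentE.mono {A B : Finset (ℕ × Option ℕ)} (h : A ⊆ B) (hB : ConsistentE B) :
    ConsistentE A := fun p hp q hq => hB p (h hp) q (h hq)

lemma consistentE_of_forall_eq {E : Finset (ℕ × Option ℕ)} {f : ℕ → Option ℕ}
    (h : ∀ x ∈ E, x.2 = f x.1) : ConsistentE E := by
  intro p hp q hq hpq
  rw [h p hp, h q hq, hpq]

lemma consistentE_union_iff {A B : Finset (ℕ × Option ℕ)} :
    ConsistentE (A ∪ B) ↔ ConsistentE A ∧ ConsistentE B ∧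
      ∀ p ∈ A, ∀ q ∈ B, p.1 = q.1 → p.2 = q.2 := by
  refine ⟨fun h => ⟨h.mono Finset.subset_union_left, h.mono Finset.subset_union_right,
    fun p hp q hq => h p (Finset.mem_union_left _ hp) q (Finset.mem_union_right _ hq)⟩, ?_⟩
  rintro ⟨hA, hB, hAB⟩ p hp q hq hpq
  rcases Finset.mem_union.1 hp with hp | hp <;> rcases Finset.mem_union.1 hq with hq | hq
  · exact hA p hp q hq hpq
  · exact hAB p hp q hq hpq
  · exact (hAB q hq p hp hpq.symm).symm
  · exact hB p hp q hq hpq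

lemma exists_conflict_of_not_consistentE_union {A B : Finset (ℕ × Option ℕ)}
    (hA : ConsistentE A) (hB : ConsistentE B) (h : ¬ ConsistentE (A ∪ B)) :
    ∃ a x y, (a, x) ∈ A ∧ (a, y) ∈ B ∧ x ≠ y := by
  simp only [consistentE_union_iff, hA, hB, true_and, not_forall] at h
  obtain ⟨p, hp, q, hq, h1, h2⟩ := h
  exact ⟨p.1, p.2, q.2, hp, h1 ▸ hq, h2⟩

lemma mem_liftK {K : Finset (ℕ × ℕ)} {x : ℕ × Option ℕ} :
    x ∈ liftK K ↔ ∃ δ, (x.1, δ) ∈ K ∧ x.2 = some δ := by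
  obtain ⟨a, v⟩ := x
  simp only [liftK, Finset.mem_image, Prod.ext_iff]
  constructor
  · rintro ⟨p, hp, rfl, rfl⟩; exact ⟨p.2, hp, rfl⟩
  · rintro ⟨δ, hδ, rfl⟩; exact ⟨(a, δ), hδ, rfl, rfl⟩

lemma some_mem_liftK {K : Finset (ℕ × ℕ)} {a δ : ℕ} :
    (a, some δ) ∈ liftK K ↔ (a, δ) ∈ K := by
  simp [mem_liftK]

lemma liftK_mono {K K' : Finset (ℕ × ℕ)} (h : K ⊆ K') : liftK K ⊆ liftK K' :=
  Finset.image_subset_image h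

lemma liftK_subset_liftK_iff {K K' : Finset (ℕ × ℕ)} : liftK K ⊆ liftK K' ↔ K ⊆ K' :=
  ⟨fun h _ hp => some_mem_liftK.1 (h (some_mem_liftK.2 hp)), liftK_mono⟩

lemma card_liftK (K : Finset (ℕ × ℕ)) : (liftK K).card = K.card :=
  Finset.card_image_of_injective _ fun p q h => by simpa [Prod.ext_iff] using h

lemma Rule.WF.consistentE_liftK {r : Rule} (h : r.WF) : ConsistentE (liftK r.K) := by
  intro p hp q hq hpq
  obtain ⟨δ, hδ, hp2⟩ := mem_liftK.1 hp
  obtain ⟨δ', hδ', hq2⟩ := mem_liftK.1 hq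
  have := h _ hδ _ hδ' hpq
  simp only [Prod.mk.injEq] at this
  rw [hp2, hq2, this.2]

lemma Rule.mem_attrs {r : Rule} {a : ℕ} : a ∈ r.attrs ↔ ∃ δ, (a, δ) ∈ r.K := by
  simp [Rule.attrs]

lemma mem_attrs {S : Finset Rule} {a : ℕ} :
    a ∈ attrs S ↔ ∃ r ∈ S, ∃ δ, (a, δ) ∈ r.K := by
  simp only [attrs, Finset.mem_biUnion, Rule.mem_attrs]

lemma attrs_mono {S T : Finset Rule} (h : S ⊆ T) : attrs S ⊆ attrs T :=
  Finset.biUnion_subset_biUnion_of_subset_left _ h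

lemma mem_VS {S : Finset Rule} {a δ : ℕ} : δ ∈ VS S a ↔ ∃ r ∈ S, (a, δ) ∈ r.K := by
  simp only [VS, Finset.mem_image, Finset.mem_filter, Finset.mem_biUnion]
  constructor
  · rintro ⟨⟨a', δ'⟩, ⟨⟨r, hr, hp⟩, rfl⟩, rfl⟩; exact ⟨r, hr, hp⟩
  · rintro ⟨r, hr, h⟩; exact ⟨(a, δ), ⟨⟨r, hr, h⟩, rfl⟩, rfl⟩

lemma none_mem_allowed (S : Finset Rule) (a : ℕ) : none ∈ allowed S true a := by
  simp [allowed]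

lemma some_mem_allowed_iff {S : Finset Rule} {ext : Bool} {a δ : ℕ} :
    some δ ∈ allowed S ext a ↔ δ ∈ VS S a := by
  cases ext <;> simp [allowed]

lemma allowed_mono {S T : Finset Rule} (h : S ⊆ T) {a : ℕ} {l : Option ℕ}
    (hl : l ∈ allowed S true a) : l ∈ allowed T true a := by
  cases l with
  | none => exact none_mem_allowed T a
  | some δ =>
    obtain ⟨r, hr, hδ⟩ := mem_VS.1 (some_mem_allowed_iff.1 hl)
    exact some_mem_allowed_iff.2 (mem_VS.2 ⟨r, h hr, hδ⟩)

lemma Rule.mem_restrict_K {r : Rule} {α : Finset (ℕ × Option ℕ)} {p : ℕ × ℕ} :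
    p ∈ (r.restrict α).K ↔ p ∈ r.K ∧ (p.1, some p.2) ∉ α := by
  simp [Rule.restrict]

lemma Rule.restrict_K_subset (r : Rule) (α : Finset (ℕ × Option ℕ)) :
    (r.restrict α).K ⊆ r.K := Finset.filter_subset _ _

lemma Rule.restrict_K_anti (r : Rule) {α β : Finset (ℕ × Option ℕ)} (h : α ⊆ β) :
    (r.restrict β).K ⊆ (r.restrict α).K := fun p hp => by
  rw [Rule.mem_restrict_K] at hp ⊢
  exact ⟨hp.1, fun hc => hp.2 (h hc)⟩

lemma Rule.len_restrict_empty (r : Rule) : (r.restrict ∅).len = r.len := by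
  simp [Rule.restrict, Rule.len]

lemma Rule.len_restrict_eq_zero_iff {r : Rule} {α : Finset (ℕ × Option ℕ)} :
    (r.restrict α).len = 0 ↔ liftK r.K ⊆ α := by
  simp only [Rule.len, Finset.card_eq_zero, Finset.eq_empty_iff_forall_notMem,
    Rule.mem_restrict_K, not_and, not_not]
  constructor
  · intro h x hx
    obtain ⟨δ, hδ, hx2⟩ := mem_liftK.1 hx
    simpa [← hx2] using h _ hδ
  · exact fun h p hp => h (some_mem_liftK.2 hp)

lemma mem_restrict {S : Finset Rule} {α : Finset (ℕ × Option ℕ)} {r₀ : Rule} :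
    r₀ ∈ restrict S α ↔
      ∃ r ∈ S, ConsistentE (liftK r.K ∪ α) ∧ r.restrict α = r₀ := by
  simp [restrict, and_assoc]

lemma restrict_mem_restrict {S : Finset Rule} {α : Finset (ℕ × Option ℕ)} {r : Rule}
    (hr : r ∈ S) (h : ConsistentE (liftK r.K ∪ α)) : r.restrict α ∈ restrict S α :=
  mem_restrict.2 ⟨r, hr, h, rfl⟩

lemma attrs_restrict_subset (S : Finset Rule) (α : Finset (ℕ × Option ℕ)) :
    attrs (restrict S α) ⊆ attrs S := by
  intro a ha
  obtain ⟨_, hr₀, δ, hδ⟩ := mem_attrs.1 ha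
  obtain ⟨r, hrS, -, rfl⟩ := mem_restrict.1 hr₀
  exact mem_attrs.2 ⟨r, hrS, δ, r.restrict_K_subset α hδ⟩

lemma R_SR_subset (S : Finset Rule) : R_SR S ⊆ S := Finset.filter_subset _ _

lemma exists_mem_R_SR_K_subset {S : Finset Rule} {r : Rule} (hr : r ∈ S) :
    ∃ r' ∈ R_SR S, r'.K ⊆ r.K := by
  obtain ⟨r', hr'S, hmin⟩ :=
    Finset.exists_minimalFor Rule.K (S.filter fun r' => r'.K ⊆ r.K) ⟨r, by simp [hr]⟩
  simp only [Finset.mem_filter] at hr'S hmin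
  refine ⟨r', Finset.mem_filter.2 ⟨hr'S.1, ?_⟩, hr'S.2⟩
  rintro ⟨r'', hr''S, hlt⟩
  exact hlt.2 (hmin ⟨hr''S, hlt.1.trans hr'S.2⟩ hlt.1)

lemma exists_mem_R_SR_len_restrict_eq_zero {S : Finset Rule} {α : Finset (ℕ × Option ℕ)}
    (hα : ConsistentE α) {r : Rule} (hr : r ∈ S) (hrα : liftK r.K ⊆ α) :
    ∃ r' ∈ R_SR S, ConsistentE (liftK r'.K ∪ α) ∧ (r'.restrict α).len = 0 := by
  obtain ⟨r', hr', hsub⟩ := exists_mem_R_SR_K_subset hr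
  have hr'α : liftK r'.K ⊆ α := (liftK_mono hsub).trans hrα
  exact ⟨r', hr', by rwa [Finset.union_eq_right.2 hr'α], Rule.len_restrict_eq_zero_iff.2 hr'α⟩

lemma isNodeCover_attrs (X : Finset Rule) : IsNodeCover X (attrs X) := by
  refine ⟨subset_rfl, fun r hr hne => ?_⟩
  obtain ⟨a, ha⟩ := hne
  exact ⟨a, Finset.mem_inter.2 ⟨ha, mem_attrs.2 ⟨r, hr, Rule.mem_attrs.1 ha⟩⟩⟩

lemma IsNodeCover.beta_le {X : Finset Rule} {B : Finset ℕ} (h : IsNodeCover X B) :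
    beta X ≤ B.card := Nat.sInf_le ⟨B, h, rfl⟩

lemma exists_isNodeCover_card_eq_beta (X : Finset Rule) :
    ∃ B, IsNodeCover X B ∧ B.card = beta X :=
  Nat.sInf_mem (s := {c | ∃ B, IsNodeCover X B ∧ B.card = c})
    ⟨_, attrs X, isNodeCover_attrs X, rfl⟩

lemma beta_eq_zero_of_forall_len_eq_zero {X : Finset Rule} (h : ∀ r ∈ X, r.len = 0) :
    beta X = 0 := by
  refine Nat.eq_zero_of_le_zero (IsNodeCover.beta_le (B := ∅) ⟨Finset.empty_subset _, ?_⟩)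
  intro r hr hne
  obtain ⟨a, ha⟩ := hne
  obtain ⟨δ, hδ⟩ := Rule.mem_attrs.1 ha
  have hK : r.K = ∅ := Finset.card_eq_zero.1 (h r hr)
  simp [hK] at hδ

lemma I_SR_subset (X : Finset Rule) : I_SR X ⊆ X := by
  unfold I_SR
  split
  · exact Finset.filter_subset _ _
  · exact subset_rfl

lemma I_SR_of_forall_len_ne_zero {X : Finset Rule} (h : ∀ r ∈ X, r.len ≠ 0) : I_SR X = X := by
  rw [I_SR, if_neg]
  rintro ⟨r, hr, h0⟩
  exact h r hr h0

lemma beta_I_SR_of_exists_len_eq_zero {X : Finset Rule} (h : ∃ r ∈ X, r.len = 0) :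
    beta (I_SR X) = 0 := by
  rw [I_SR, if_pos h]
  exact beta_eq_zero_of_forall_len_eq_zero fun r hr => (Finset.mem_filter.1 hr).2

lemma Splus_subset (X : Finset Rule) : Splus X ⊆ X := Finset.filter_subset _ _

/-- Moves `α` into `E_ESR(T)` without changing `T_α`: on `T`, a value that does not occur in
`T` acts like `*`. -/
def normalize (T : Finset Rule) (α : Finset (ℕ × Option ℕ)) : Finset (ℕ × Option ℕ) :=
  (α.filter fun p => p.1 ∈ attrs T).image fun p =>
    (p.1, if p.2 ∈ (VS T p.1).image some then p.2 else none)

lemma mem_normalize {T : Finset Rule} {α : Finset (ℕ × Option ℕ)} {a : ℕ} {w : Option ℕ} :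
    (a, w) ∈ normalize T α ↔ ∃ v, (a, v) ∈ α ∧ a ∈ attrs T ∧
      w = if v ∈ (VS T a).image some then v else none := by
  simp only [normalize, Finset.mem_image, Finset.mem_filter, Prod.mk.injEq]
  constructor
  · rintro ⟨⟨a', v⟩, ⟨hv, ha⟩, rfl, rfl⟩; exact ⟨v, hv, ha, rfl⟩
  · rintro ⟨v, hv, ha, rfl⟩; exact ⟨(a, v), ⟨hv, ha⟩, rfl, rfl⟩

lemma ConsistentE.normalize {α : Finset (ℕ × Option ℕ)} (hα : ConsistentE α)
    (T : Finset Rule) : ConsistentE (normalize T α) := by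
  rintro ⟨a, _⟩ hp ⟨b, _⟩ hq (rfl : a = b)
  obtain ⟨v, hv, -, rfl⟩ := mem_normalize.1 hp
  obtain ⟨w, hw, -, rfl⟩ := mem_normalize.1 hq
  obtain rfl : v = w := hα _ hv _ hw rfl
  rfl

lemma normalize_mem_ESys {α : Finset (ℕ × Option ℕ)} (hα : ConsistentE α)
    (T : Finset Rule) :
    normalize T α ∈ ESys T true := by
  refine ⟨hα.normalize T, ?_⟩
  rintro ⟨a, _⟩ hp
  obtain ⟨v, -, ha, rfl⟩ := mem_normalize.1 hp
  refine ⟨ha, ?_⟩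
  split_ifs with hv
  · obtain ⟨δ, hδ, rfl⟩ := Finset.mem_image.1 hv
    exact some_mem_allowed_iff.2 hδ
  · exact none_mem_allowed T a

lemma some_mem_normalize_iff {T : Finset Rule} {α : Finset (ℕ × Option ℕ)} {a δ : ℕ}
    (h : δ ∈ VS T a) : (a, some δ) ∈ normalize T α ↔ (a, some δ) ∈ α := by
  obtain ⟨r, hr, hK⟩ := mem_VS.1 h
  have hδ : some δ ∈ (VS T a).image some := Finset.mem_image_of_mem _ h
  rw [mem_normalize]
  constructor
  · rintro ⟨v, hv, -, hv'⟩
    split_ifs at hv' with h'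
    · exact hv' ▸ hv
  · exact fun hα => ⟨some δ, hα, mem_attrs.2 ⟨r, hr, δ, hK⟩, by simp [hδ]⟩

lemma consistentE_union_normalize_iff {T : Finset Rule} {α : Finset (ℕ × Option ℕ)} {r : Rule}
    (hr : r ∈ T) (hrc : ConsistentE (liftK r.K)) (hα : ConsistentE α) :
    ConsistentE (liftK r.K ∪ normalize T α) ↔ ConsistentE (liftK r.K ∪ α) := by
  simp only [consistentE_union_iff, hrc, hα, hα.normalize T, true_and]
  constructor
  · rintro h ⟨a, _⟩ hp ⟨b, v⟩ hq (rfl : a = b)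
    obtain ⟨δ, hδ, rfl⟩ := mem_liftK.1 hp
    have hq' : (a, if v ∈ (VS T a).image some then v else none) ∈ normalize T α :=
      mem_normalize.2 ⟨v, hq, mem_attrs.2 ⟨r, hr, δ, hδ⟩, rfl⟩
    have := h _ hp _ hq' rfl
    split_ifs at this
    · exact this
  · rintro h ⟨a, _⟩ hp ⟨b, _⟩ hq (rfl : a = b)
    obtain ⟨v, hv, -, rfl⟩ := mem_normalize.1 hq
    obtain ⟨δ, hδ, rfl⟩ := mem_liftK.1 hp
    have hδT : some δ ∈ (VS T a).image some :=
      Finset.mem_image_of_mem _ (mem_VS.2 ⟨r, hr, hδ⟩)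
    have hv' : v = some δ := (h _ hp _ hv rfl).symm
    simp only [hv', if_pos hδT]

lemma restrict_normalize {T : Finset Rule} (hT : ∀ r ∈ T, ConsistentE (liftK r.K))
    {α : Finset (ℕ × Option ℕ)} (hα : ConsistentE α) :
    restrict T (normalize T α) = restrict T α := by
  have hrestr : ∀ r ∈ T, r.restrict (normalize T α) = r.restrict α := fun r hr => by
    simp only [Rule.restrict, Rule.mk.injEq, and_true]
    exact Finset.filter_congr fun p hp =>
      not_congr (some_mem_normalize_iff (mem_VS.2 ⟨r, hr, hp⟩))
  ext r₀
  simp only [mem_restrict]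
  refine exists_congr fun r => and_congr_right fun hr => ?_
  rw [consistentE_union_normalize_iff hr (hT r hr) hα, hrestr r hr]

lemma betaPlus_le_beta_ESRplus {T : Finset Rule} (hT : ∀ r ∈ T, ConsistentE (liftK r.K))
    {α : Finset (ℕ × Option ℕ)} (hα : ConsistentE α)
    (h : ∀ r ∈ restrict T α, r.len ≠ 0) :
    betaPlus (restrict T α) ≤ beta_ESRplus T := by
  have hbdd : BddAbove {b | ∃ α ∈ ESys T true, betaPlus (I_SR (restrict T α)) = b} := by
    refine ⟨(attrs T).card, ?_⟩
    rintro _ ⟨α, -, rfl⟩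
    refine (isNodeCover_attrs _).beta_le.trans (Finset.card_le_card ?_)
    exact (attrs_mono ((Splus_subset _).trans (I_SR_subset _))).trans (attrs_restrict_subset _ _)
  have := le_csSup hbdd ⟨normalize T α, normalize_mem_ESys hα T, rfl⟩
  rwa [restrict_normalize hT hα, I_SR_of_forall_len_ne_zero h] at this

namespace DGraph

variable (G : DGraph)

lemma pathEqs_cons_of_label_eq {u a : ℕ} (h : G.label u = .inl a) (l : Option ℕ)
    (rest : List (ℕ × Option ℕ)) :
    G.pathEqs ((u, l) :: rest) = insert (a, l) (G.pathEqs rest) := by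
  simp [pathEqs, h]

lemma card_pathEqs_le (pl : List (ℕ × Option ℕ)) : (G.pathEqs pl).card ≤ pl.length :=
  (List.toFinset_card_le _).trans (List.length_filterMap_le _ _)

lemma termSet_subset {S : Finset Rule} {ext : Bool} (hG : G.IsDG S ext) {v : ℕ}
    (hterm : G.IsTerminal v) (hv : v < G.n) : G.termSet v ⊆ S := by
  have := hG.2.2.2 v hv
  rw [if_pos hterm] at this
  obtain ⟨Z, hZ, hZS⟩ := this
  simpa [termSet, hZ] using hZS

def reach (v : ℕ) : Finset ℕ := (Finset.range G.n).filter fun w => Relation.TransGen G.step v w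

variable {G}

lemma card_reach_lt (hval : ∀ e ∈ G.edges, e.1 < G.n ∧ e.2.2 < G.n) (hac : G.Acyclic)
    {u w : ℕ} {l : Option ℕ} (he : (u, l, w) ∈ G.edges) :
    (G.reach w).card < (G.reach u).card := by
  refine Finset.card_lt_card ⟨fun x hx => ?_, fun hsub => ?_⟩
  · simp only [reach, Finset.mem_filter] at hx ⊢
    exact ⟨hx.1, .head ⟨l, he⟩ hx.2⟩
  · have hw : w ∈ G.reach u :=
      Finset.mem_filter.2 ⟨Finset.mem_range.2 (hval _ he).2, .single ⟨l, he⟩⟩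
    exact hac w (Finset.mem_filter.1 (hsub hw)).2

lemma length_le_card_reach (hval : ∀ e ∈ G.edges, e.1 < G.n ∧ e.2.2 < G.n) (hac : G.Acyclic)
    (pl : List (ℕ × Option ℕ)) {v t : ℕ} (h : G.chainFrom v pl t) :
    pl.length ≤ (G.reach v).card := by
  induction pl generalizing v with
  | nil => exact Nat.zero_le _
  | cons e rest ih =>
    obtain ⟨-, w, hw, hrest⟩ := h
    have := card_reach_lt hval hac hw
    have := ih hrest
    simp only [List.length_cons]
    omega

lemma length_le_depth (hval : ∀ e ∈ G.edges, e.1 < G.n ∧ e.2.2 < G.n) (hac : G.Acyclic)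
    {pl : List (ℕ × Option ℕ)} {t : ℕ} (h : G.IsCompletePath pl t) :
    pl.length ≤ G.depth := by
  refine le_csSup ⟨(G.reach G.root).card, ?_⟩ ⟨pl, t, h, rfl⟩
  rintro m ⟨p, t', ⟨hc, -, -⟩, rfl⟩
  exact length_le_card_reach hval hac p hc

lemma exists_chainFrom_agrees {S : Finset Rule} (hG : G.IsDG S true) {f : ℕ → Option ℕ}
    (hf : ∀ a ∈ attrs S, f a ∈ allowed S true a) {v : ℕ} (hv : v < G.n) :
    ∃ pl t, G.chainFrom v pl t ∧ G.IsTerminal t ∧ t < G.n ∧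
      ∀ x ∈ G.pathEqs pl, x.2 = f x.1 := by
  induction hN : (G.reach v).card using Nat.strong_induction_on generalizing v with
  | _ N ih =>
    by_cases hterm : G.IsTerminal v
    · exact ⟨[], v, rfl, hterm, hv, by simp [pathEqs]⟩
    have := hG.2.2.2 v hv
    rw [if_neg hterm] at this
    obtain ⟨a, hlab, ha, hedges, -⟩ := this
    obtain ⟨w, hw⟩ := (hedges (f a)).2 (hf a ha)
    obtain ⟨pl, t, hc, ht, htn, hagree⟩ :=
      ih _ (hN ▸ card_reach_lt hG.2.1 hG.2.2.1 hw) (hG.2.1 _ hw).2 rfl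
    refine ⟨(v, f a) :: pl, t, ⟨rfl, w, hw, hc⟩, ht, htn, ?_⟩
    rw [G.pathEqs_cons_of_label_eq hlab]
    simpa using hagree

lemma exists_isCompletePath_agrees {S : Finset Rule} (hG : G.IsDG S true) {f : ℕ → Option ℕ}
    (hf : ∀ a ∈ attrs S, f a ∈ allowed S true a) :
    ∃ pl t, G.IsCompletePath pl t ∧ ∀ x ∈ G.pathEqs pl, x.2 = f x.1 := by
  obtain ⟨pl, t, hc, ht, htn, hagree⟩ := exists_chainFrom_agrees hG hf hG.1
  exact ⟨pl, t, ⟨hc, ht, htn⟩, hagree⟩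

end DGraph

inductive DTree : Type where
  | leaf : Finset Rule → DTree
  | node : ℕ → (Option ℕ → DTree) → DTree

namespace DTree

variable (S : Finset Rule)

/-- The subtree reached along a sequence of edge labels; only labels in `EV_S` are edges. -/
def subtree : DTree → List (Option ℕ) → Option DTree
  | t, [] => some t
  | .leaf _, _ :: _ => none
  | .node a c, l :: p => if l ∈ allowed S true a then subtree (c l) p else none

def paths : DTree → Finset (List (Option ℕ))
  | .leaf _ => {[]}
  | .node a c => insert [] ((allowed S true a).biUnion fun l => (paths (c l)).image (l :: ·))

/-- Every branch solves ESR(S) once the equations `E` asked above the tree are added. -/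
def SolvesFrom : DTree → Finset (ℕ × Option ℕ) → Prop
  | .leaf Z, E => ConsistentE E → (∀ r ∈ Z, liftK r.K ⊆ E) ∧
      (Z = ∅ → ∀ r ∈ S, ¬ ConsistentE (liftK r.K ∪ E))
  | .node a c, E => ∀ l ∈ allowed S true a, SolvesFrom (c l) (insert (a, l) E)

def height : DTree → ℕ
  | .leaf _ => 0
  | .node a c => ((allowed S true a).sup fun l => height (c l)) + 1

def IsOver : DTree → Prop
  | .leaf Z => Z ⊆ S
  | .node a c => a ∈ attrs S ∧ ∀ l, IsOver (c l)

variable {S}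

lemma subtree_nil (t : DTree) : t.subtree S [] = some t := by
  cases t <;> rfl

lemma subtree_append (p q : List (Option ℕ)) (t : DTree) :
    t.subtree S (p ++ q) = (t.subtree S p).bind fun t' => t'.subtree S q := by
  induction p generalizing t with
  | nil => rw [List.nil_append, subtree_nil]; rfl
  | cons l p ih =>
    cases t with
    | leaf Z => simp [subtree]
    | node a c =>
      simp only [List.cons_append, subtree]
      split_ifs
      · exact ih (c l)
      · rfl

lemma subtree_append_singleton {t : DTree} {p : List (Option ℕ)} {a : ℕ}
    {c : Option ℕ → DTree} (h : t.subtree S p = some (.node a c)) {l : Option ℕ}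
    (hl : l ∈ allowed S true a) : t.subtree S (p ++ [l]) = some (c l) := by
  simp [subtree_append, h, subtree, hl, subtree_nil]

lemma mem_paths_iff (t : DTree) (p : List (Option ℕ)) :
    p ∈ t.paths S ↔ (t.subtree S p).isSome := by
  induction t generalizing p with
  | leaf Z => cases p <;> simp [paths, subtree]
  | node a c ih =>
    cases p with
    | nil => simp [paths, subtree]
    | cons l p =>
      simp only [paths, subtree, Finset.mem_insert, reduceCtorEq, false_or, Finset.mem_biUnion,
        Finset.mem_image, List.cons.injEq]
      constructor
      · rintro ⟨l, hl, p, hp, rfl, rfl⟩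
        rw [if_pos hl]
        exact (ih l p).1 hp
      · intro h
        split_ifs at h with hl
        · exact ⟨l, hl, p, (ih l p).2 h, rfl, rfl⟩
        · simp at h

lemma nil_mem_paths (t : DTree) : [] ∈ t.paths S := by
  cases t <;> simp [paths]

lemma IsOver.subtree {t t' : DTree} (ht : t.IsOver S) {p : List (Option ℕ)}
    (h : t.subtree S p = some t') : t'.IsOver S := by
  induction p generalizing t with
  | nil => rw [subtree_nil, Option.some_inj] at h; exact h ▸ ht
  | cons l p ih =>
    cases t with
    | leaf Z => simp [DTree.subtree] at h
    | node a c =>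
      simp only [DTree.subtree] at h
      split_ifs at h
      exact ih (ht.2 l) h

variable (S) (t : DTree)

/-- The nodes of `t.toDGraph S` are the numbers `0, …, #paths - 1`, via an enumeration of the
paths of `t`. -/
def nodeIdx (p : List (Option ℕ)) : ℕ :=
  if h : p ∈ t.paths S then (t.paths S).equivFin ⟨p, h⟩ else 0

def nodePath (v : ℕ) : List (Option ℕ) :=
  if h : v < (t.paths S).card then ((t.paths S).equivFin.symm ⟨v, h⟩ : List (Option ℕ))
  else []

def outLabels (p : List (Option ℕ)) : Finset (Option ℕ) :=
  match t.subtree S p with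
  | some (.node a _) => allowed S true a
  | _ => ∅

def nodeLabel (p : List (Option ℕ)) : ℕ ⊕ Finset Rule :=
  match t.subtree S p with
  | some (.node a _) => .inl a
  | some (.leaf Z) => .inr Z
  | none => .inr ∅

def toDGraph : DGraph where
  n := (t.paths S).card
  root := nodeIdx S t []
  label v := nodeLabel S t (nodePath S t v)
  edges := (t.paths S).biUnion fun p =>
    (outLabels S t p).image fun l => (nodeIdx S t p, l, nodeIdx S t (p ++ [l]))

variable {S t}

lemma nodeIdx_lt {p : List (Option ℕ)} (hp : p ∈ t.paths S) :
    nodeIdx S t p < (t.paths S).card := by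
  rw [nodeIdx, dif_pos hp]
  exact Fin.isLt _

lemma nodePath_nodeIdx {p : List (Option ℕ)} (hp : p ∈ t.paths S) :
    nodePath S t (nodeIdx S t p) = p := by
  rw [nodePath, dif_pos (nodeIdx_lt hp)]
  simp [nodeIdx, hp]

lemma exists_nodeIdx_eq {v : ℕ} (hv : v < (t.paths S).card) :
    ∃ p ∈ t.paths S, nodeIdx S t p = v := by
  refine ⟨_, ((t.paths S).equivFin.symm ⟨v, hv⟩).2, ?_⟩
  simp [nodeIdx]

lemma nodeIdx_inj {p q : List (Option ℕ)} (hp : p ∈ t.paths S) (hq : q ∈ t.paths S)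
    (h : nodeIdx S t p = nodeIdx S t q) : p = q := by
  rw [← nodePath_nodeIdx hp, h, nodePath_nodeIdx hq]

lemma mem_outLabels {p : List (Option ℕ)} {l : Option ℕ} :
    l ∈ outLabels S t p ↔
      ∃ a c, t.subtree S p = some (.node a c) ∧ l ∈ allowed S true a := by
  unfold outLabels
  split
  · next a c h => simp [h]
  · next h => simp only [Finset.notMem_empty, false_iff]; rintro ⟨a, c, h', -⟩; exact h a c h'

lemma append_mem_paths_iff {p : List (Option ℕ)} {l : Option ℕ} :
    p ++ [l] ∈ t.paths S ↔ p ∈ t.paths S ∧ l ∈ outLabels S t p := by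
  rw [mem_paths_iff, mem_paths_iff, subtree_append, mem_outLabels]
  rcases h : t.subtree S p with - | (⟨Z⟩ | ⟨a, c⟩)
  · simp
  · simp [subtree]
  · by_cases hl : l ∈ allowed S true a <;> simp [subtree, hl, subtree_nil]

lemma mem_toDGraph_edges {e : ℕ × Option ℕ × ℕ} :
    e ∈ (t.toDGraph S).edges ↔ ∃ p ∈ t.paths S, ∃ l ∈ outLabels S t p,
      (nodeIdx S t p, l, nodeIdx S t (p ++ [l])) = e := by
  simp [toDGraph]

lemma mem_toDGraph_edges_nodeIdx {p : List (Option ℕ)} (hp : p ∈ t.paths S) {l : Option ℕ}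
    {w : ℕ} : (nodeIdx S t p, l, w) ∈ (t.toDGraph S).edges ↔
      l ∈ outLabels S t p ∧ w = nodeIdx S t (p ++ [l]) := by
  rw [mem_toDGraph_edges]
  constructor
  · rintro ⟨q, hq, l, hl, he⟩
    simp only [Prod.mk.injEq] at he
    obtain ⟨hqp, rfl, rfl⟩ := he
    obtain rfl := nodeIdx_inj hq hp hqp
    exact ⟨hl, rfl⟩
  · rintro ⟨hl, rfl⟩
    exact ⟨p, hp, l, hl, rfl⟩

lemma isTerminal_nodeIdx_iff {p : List (Option ℕ)} (hp : p ∈ t.paths S) :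
    (t.toDGraph S).IsTerminal (nodeIdx S t p) ↔ ∃ Z, t.subtree S p = some (.leaf Z) := by
  have hsome := (mem_paths_iff t p).1 hp
  constructor
  · intro hterm
    rcases h : t.subtree S p with - | (⟨Z⟩ | ⟨a, c⟩)
    · simp [h] at hsome
    · exact ⟨Z, rfl⟩
    · have hnone : none ∈ outLabels S t p := mem_outLabels.2 ⟨a, c, h, none_mem_allowed S a⟩
      exact absurd rfl (hterm _ ((mem_toDGraph_edges_nodeIdx hp).2 ⟨hnone, rfl⟩))
  · rintro ⟨Z, hZ⟩ ⟨u, l, w⟩ he (rfl : u = nodeIdx S t p)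
    obtain ⟨a, c, h, -⟩ := mem_outLabels.1 ((mem_toDGraph_edges_nodeIdx hp).1 he).1
    simp [hZ] at h

lemma label_nodeIdx {p : List (Option ℕ)} (hp : p ∈ t.paths S) :
    (t.toDGraph S).label (nodeIdx S t p) = nodeLabel S t p := by
  simp only [toDGraph, nodePath_nodeIdx hp]

lemma termSet_nodeIdx {p : List (Option ℕ)} (hp : p ∈ t.paths S) {Z : Finset Rule}
    (hZ : t.subtree S p = some (.leaf Z)) : (t.toDGraph S).termSet (nodeIdx S t p) = Z := by
  simp [DGraph.termSet, label_nodeIdx hp, nodeLabel, hZ]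

lemma acyclic_toDGraph : (t.toDGraph S).Acyclic := by
  have hstep : ∀ u v, (t.toDGraph S).step u v →
      (nodePath S t u).length < (nodePath S t v).length := by
    rintro u v ⟨l, he⟩
    obtain ⟨p, hp, l, hl, he⟩ := mem_toDGraph_edges.1 he
    simp only [Prod.mk.injEq] at he
    obtain ⟨rfl, -, rfl⟩ := he
    rw [nodePath_nodeIdx hp, nodePath_nodeIdx (append_mem_paths_iff.2 ⟨hp, hl⟩)]
    simp
  intro v hv
  have := Relation.TransGen.lift (p := (· < ·)) (fun v => (nodePath S t v).length) hstep v v hv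
  rw [Relation.transGen_eq_self] at this
  exact lt_irrefl _ this

lemma isDG_toDGraph (ht : t.IsOver S) : (t.toDGraph S).IsDG S true := by
  refine ⟨nodeIdx_lt (nil_mem_paths t), ?_, acyclic_toDGraph, ?_⟩
  · intro e he
    obtain ⟨p, hp, l, hl, rfl⟩ := mem_toDGraph_edges.1 he
    exact ⟨nodeIdx_lt hp, nodeIdx_lt (append_mem_paths_iff.2 ⟨hp, hl⟩)⟩
  intro v hv
  obtain ⟨p, hp, rfl⟩ := exists_nodeIdx_eq hv
  have hsome := (mem_paths_iff t p).1 hp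
  rcases h : t.subtree S p with - | (⟨Z⟩ | ⟨a, c⟩)
  · simp [h] at hsome
  · rw [if_pos ((isTerminal_nodeIdx_iff hp).2 ⟨Z, h⟩)]
    exact ⟨Z, by simp [label_nodeIdx hp, nodeLabel, h], ht.subtree h⟩
  · rw [if_neg (by simp [isTerminal_nodeIdx_iff hp, h])]
    refine ⟨a, by simp [label_nodeIdx hp, nodeLabel, h], (ht.subtree h).1, fun l => ?_, ?_⟩
    · simp [mem_toDGraph_edges_nodeIdx hp, mem_outLabels, h]
    · intro l w w' hw hw'
      rw [((mem_toDGraph_edges_nodeIdx hp).1 hw).2, ((mem_toDGraph_edges_nodeIdx hp).1 hw').2]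

lemma isTree_toDGraph : (t.toDGraph S).IsTree := by
  constructor
  · intro e he hroot
    obtain ⟨p, hp, l, hl, rfl⟩ := mem_toDGraph_edges.1 he
    have := nodeIdx_inj (append_mem_paths_iff.2 ⟨hp, hl⟩) (nil_mem_paths t) hroot
    simp at this
  · intro v hv hvroot
    obtain ⟨p, hp, rfl⟩ := exists_nodeIdx_eq hv
    obtain ⟨q, l, rfl⟩ : ∃ q l, p = q ++ [l] := by
      rcases List.eq_nil_or_concat p with rfl | ⟨q, l, rfl⟩
      · exact absurd rfl hvroot
      · exact ⟨q, l, List.concat_eq_append⟩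
    obtain ⟨hq, hl⟩ := append_mem_paths_iff.1 hp
    refine ⟨_, ⟨(mem_toDGraph_edges_nodeIdx hq).2 ⟨hl, rfl⟩, rfl⟩, ?_⟩
    rintro ⟨u, l', w⟩ ⟨he, rfl : w = _⟩
    obtain ⟨q', hq', l', hl', he'⟩ := mem_toDGraph_edges.1 he
    simp only [Prod.mk.injEq] at he'
    obtain ⟨rfl, rfl, hw⟩ := he'
    obtain ⟨rfl, hll⟩ :=
      List.append_inj' (nodeIdx_inj (append_mem_paths_iff.2 ⟨hq', hl'⟩) hp hw) rfl
    simp only [List.cons.injEq, and_true] at hll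
    rw [hll]

lemma pathEqs_cons {p : List (Option ℕ)} (hp : p ∈ t.paths S) {a : ℕ}
    {c : Option ℕ → DTree} (h : t.subtree S p = some (.node a c)) (l : Option ℕ)
    (rest : List (ℕ × Option ℕ)) :
    (t.toDGraph S).pathEqs ((nodeIdx S t p, l) :: rest) =
      insert (a, l) ((t.toDGraph S).pathEqs rest) :=
  (t.toDGraph S).pathEqs_cons_of_label_eq (by simp [label_nodeIdx hp, nodeLabel, h]) l rest

lemma chainFrom_cons {p : List (Option ℕ)} (hp : p ∈ t.paths S) {t' : DTree}
    (h : t.subtree S p = some t') {u : ℕ} {l : Option ℕ} {rest : List (ℕ × Option ℕ)}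
    {v : ℕ}
    (hc : (t.toDGraph S).chainFrom (nodeIdx S t p) ((u, l) :: rest) v) :
    ∃ a c, t' = .node a c ∧ l ∈ allowed S true a ∧ u = nodeIdx S t p ∧
      p ++ [l] ∈ t.paths S ∧ t.subtree S (p ++ [l]) = some (c l) ∧
      (t.toDGraph S).chainFrom (nodeIdx S t (p ++ [l])) rest v := by
  obtain ⟨he, w, hw, hrest⟩ := hc
  obtain ⟨hl, rfl⟩ := (mem_toDGraph_edges_nodeIdx hp).1 hw
  obtain ⟨a, c, h', hla⟩ := mem_outLabels.1 hl
  obtain rfl : t' = .node a c := Option.some_injective _ (h.symm.trans h')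
  exact ⟨a, c, rfl, hla, he, append_mem_paths_iff.2 ⟨hp, hl⟩,
    subtree_append_singleton h' hla, hrest⟩

lemma solvesFrom_chainFrom (pl : List (ℕ × Option ℕ)) {p : List (Option ℕ)}
    (hp : p ∈ t.paths S) {t' : DTree} (h : t.subtree S p = some t')
    {E : Finset (ℕ × Option ℕ)} (hE : t'.SolvesFrom S E) {v : ℕ}
    (hc : (t.toDGraph S).chainFrom (nodeIdx S t p) pl v) (hv : (t.toDGraph S).IsTerminal v)
    (hcons : ConsistentE (E ∪ (t.toDGraph S).pathEqs pl)) :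
    (∀ r ∈ (t.toDGraph S).termSet v, liftK r.K ⊆ E ∪ (t.toDGraph S).pathEqs pl) ∧
      ((t.toDGraph S).termSet v = ∅ →
        ∀ r ∈ S, ¬ ConsistentE (liftK r.K ∪ (E ∪ (t.toDGraph S).pathEqs pl))) := by
  induction pl generalizing p t' E with
  | nil =>
    obtain rfl : nodeIdx S t p = v := hc
    obtain ⟨Z, hZ⟩ := (isTerminal_nodeIdx_iff hp).1 hv
    obtain rfl : t' = .leaf Z := Option.some_injective _ (h.symm.trans hZ)
    rw [termSet_nodeIdx hp hZ]
    simpa [DGraph.pathEqs] using hE (by simpa [DGraph.pathEqs] using hcons)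
  | cons e rest ih =>
    obtain ⟨u, l⟩ := e
    obtain ⟨a, c, rfl, hl, rfl, hp', h', hc'⟩ := chainFrom_cons hp h hc
    rw [pathEqs_cons hp h, Finset.union_insert, ← Finset.insert_union] at hcons ⊢
    exact ih hp' h' (hE _ hl) hc' hcons

lemma length_le_height_of_chainFrom (pl : List (ℕ × Option ℕ)) {p : List (Option ℕ)}
    (hp : p ∈ t.paths S) {t' : DTree} (h : t.subtree S p = some t') {v : ℕ}
    (hc : (t.toDGraph S).chainFrom (nodeIdx S t p) pl v) : pl.length ≤ t'.height S := by
  induction pl generalizing p t' with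
  | nil => exact Nat.zero_le _
  | cons e rest ih =>
    obtain ⟨a, c, rfl, hl, -, hp', h', hc'⟩ := chainFrom_cons hp h hc
    have := Finset.le_sup (f := fun l => (c l).height S) hl
    simp only [List.length_cons, height]
    have := ih hp' h' hc'
    omega

theorem treeSolvesESR_toDGraph (ht : t.IsOver S) (hsol : t.SolvesFrom S ∅) :
    TreeSolvesESR S (t.toDGraph S) := by
  refine ⟨isDG_toDGraph ht, isTree_toDGraph, ?_⟩
  rintro pl v ⟨hc, hv, -⟩ hcons
  simpa using solvesFrom_chainFrom pl (nil_mem_paths t) (subtree_nil t) hsol hc hv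
    (by simpa using hcons)

theorem depth_toDGraph_le : (t.toDGraph S).depth ≤ t.height S := by
  refine csSup_le' ?_
  rintro m ⟨pl, v, ⟨hc, -, -⟩, rfl⟩
  exact length_le_height_of_chainFrom pl (nil_mem_paths t) (subtree_nil t) hc

end DTree

def answer (E : Finset (ℕ × Option ℕ)) (a : ℕ) : Option ℕ :=
  if h : ∃ v, (a, v) ∈ E then h.choose else none

lemma answer_eq {E : Finset (ℕ × Option ℕ)} (hE : ConsistentE E) {a : ℕ} {v : Option ℕ}
    (h : (a, v) ∈ E) : answer E a = v := by
  have hex : ∃ v, (a, v) ∈ E := ⟨v, h⟩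
  rw [answer, dif_pos hex]
  exact hE _ hex.choose_spec _ h rfl

lemma answer_eq_none {E : Finset (ℕ × Option ℕ)} {a : ℕ} (h : ∀ v, (a, v) ∉ E) :
    answer E a = none := by
  rw [answer, dif_neg (not_exists.2 h)]

lemma mem_of_answer_eq_some {E : Finset (ℕ × Option ℕ)} {a δ : ℕ}
    (h : answer E a = some δ) :
    (a, some δ) ∈ E := by
  rw [answer] at h
  split_ifs at h with hex
  exact h ▸ hex.choose_spec

lemma answer_mem_allowed {S : Finset Rule} {E : Finset (ℕ × Option ℕ)}
    (hE : ∀ x ∈ E, x.2 ∈ allowed S true x.1) (a : ℕ) : answer E a ∈ allowed S true a := by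
  unfold answer
  by_cases hex : ∃ v, (a, v) ∈ E
  · rw [dif_pos hex]
    exact hE (a, hex.choose) hex.choose_spec
  · rw [dif_neg hex]
    exact none_mem_allowed S a

lemma liftK_subset_of_agrees {K : Finset (ℕ × ℕ)} {P E : Finset (ℕ × Option ℕ)}
    (hKP : liftK K ⊆ P) (hP : ∀ x ∈ P, x.2 = answer E x.1) : liftK K ⊆ E := by
  intro x hx
  obtain ⟨δ, -, hx2⟩ := mem_liftK.1 hx
  have := mem_of_answer_eq_some ((hP x (hKP hx)).symm.trans hx2)
  rwa [← hx2] at this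

section LowerBounds

variable {S : Finset Rule} {G : DGraph}

theorem dPar_R_SR_le_depth (hwf : ∀ r ∈ S, r.WF) (hsol : TreeSolvesESR S G) :
    dPar (R_SR S) ≤ G.depth := by
  obtain ⟨hG, -, hsolve⟩ := hsol
  rcases (R_SR S).eq_empty_or_nonempty with hempty | hne
  · simp [dPar, hempty]
  obtain ⟨r, hr, hd⟩ := (R_SR S).exists_mem_eq_sup hne Rule.len
  have hrS := R_SR_subset S hr
  have hrc := (hwf r hrS).consistentE_liftK
  obtain ⟨pl, t, hpath, hagree⟩ := G.exists_isCompletePath_agrees hG (f := answer (liftK r.K))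
    fun a _ => answer_mem_allowed (fun x hx => by
      obtain ⟨δ, hδ, hx2⟩ := mem_liftK.1 hx
      exact hx2 ▸ some_mem_allowed_iff.2 (mem_VS.2 ⟨r, hrS, hδ⟩)) a
  obtain ⟨hrec, hempty⟩ := hsolve pl t hpath (consistentE_of_forall_eq hagree)
  have hrP : ConsistentE (liftK r.K ∪ G.pathEqs pl) := by
    refine consistentE_of_forall_eq (f := answer (liftK r.K)) fun x hx => ?_
    rcases Finset.mem_union.1 hx with hx | hx
    · exact (answer_eq hrc hx).symm
    · exact hagree x hx
  obtain ⟨r', hr'⟩ := Finset.nonempty_iff_ne_empty.2 fun h => hempty h r hrS hrP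
  have hr'S := G.termSet_subset hG hpath.2.1 hpath.2.2 hr'
  have hsub : r'.K ⊆ r.K := liftK_subset_liftK_iff.1 (liftK_subset_of_agrees (hrec r' hr') hagree)
  have hKeq : r'.K = r.K :=
    hsub.eq_of_not_ssubset fun hlt => (Finset.mem_filter.1 hr).2 ⟨r', hr'S, hlt⟩
  calc dPar (R_SR S) = (liftK r'.K).card := by rw [dPar, hd, card_liftK, hKeq, Rule.len]
    _ ≤ (G.pathEqs pl).card := Finset.card_le_card (hrec r' hr')
    _ ≤ pl.length := G.card_pathEqs_le pl
    _ ≤ G.depth := DGraph.length_le_depth hG.2.1 hG.2.2.1 hpath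

lemma exists_mem_restrict_K_of_not_consistentE {α P : Finset (ℕ × Option ℕ)}
    (hα : ConsistentE α) (hP : ∀ x ∈ P, x.2 = answer α x.1) {r : Rule} (hr : r.WF)
    (hrα : ConsistentE (liftK r.K ∪ α)) (hrP : ¬ ConsistentE (liftK r.K ∪ P)) :
    ∃ a δ, (a, δ) ∈ (r.restrict α).K ∧ (a, none) ∈ P := by
  obtain ⟨a, x, y, hx, hy, hxy⟩ := exists_conflict_of_not_consistentE_union
    hr.consistentE_liftK (consistentE_of_forall_eq hP) hrP
  obtain ⟨δ, hδ, rfl⟩ := mem_liftK.1 hx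
  have hnα : ∀ v, (a, v) ∉ α := fun v hv => by
    have := consistentE_union_iff.1 hrα |>.2.2 _ hx _ hv rfl
    exact hxy (this.trans ((hP _ hy).trans (answer_eq hα hv)).symm)
  refine ⟨a, δ, Rule.mem_restrict_K.2 ⟨hδ, hnα _⟩, ?_⟩
  have : y = none := (hP _ hy).trans (answer_eq_none hnα)
  exact this ▸ hy

lemma isNodeCover_restrict_of_refuted {T : Finset Rule} (hT : ∀ r ∈ T, r.WF)
    {α P : Finset (ℕ × Option ℕ)} (hα : ConsistentE α)
    (hP : ∀ x ∈ P, x.2 = answer α x.1) (href : ∀ r ∈ T, ¬ ConsistentE (liftK r.K ∪ P)) :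
    IsNodeCover (restrict T α)
      (((P.filter fun x => x.2 = none).image Prod.fst) ∩ attrs (restrict T α)) := by
  refine ⟨Finset.inter_subset_right, fun r₀ hr₀ _ => ?_⟩
  obtain ⟨r, hr, hrα, rfl⟩ := mem_restrict.1 hr₀
  obtain ⟨a, δ, hδ, ha⟩ :=
    exists_mem_restrict_K_of_not_consistentE hα hP (hT r hr) hrα (href r hr)
  refine ⟨a, Finset.mem_inter.2 ⟨Rule.mem_attrs.2 ⟨δ, hδ⟩,
    Finset.mem_inter.2 ⟨?_, ?_⟩⟩⟩
  · exact Finset.mem_image.2 ⟨(a, none), Finset.mem_filter.2 ⟨ha, rfl⟩, rfl⟩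
  · exact mem_attrs.2 ⟨_, hr₀, δ, hδ⟩

theorem beta_ESR_R_SR_le_depth (hwf : ∀ r ∈ S, r.WF) (hsol : TreeSolvesESR S G) :
    beta_ESR (R_SR S) ≤ G.depth := by
  obtain ⟨hG, -, hsolve⟩ := hsol
  refine csSup_le' ?_
  rintro _ ⟨α, ⟨hα, hαval⟩, rfl⟩
  by_cases h0 : ∃ r ∈ restrict (R_SR S) α, r.len = 0
  · rw [beta_I_SR_of_exists_len_eq_zero h0]
    exact Nat.zero_le _
  push Not at h0
  rw [I_SR_of_forall_len_ne_zero h0]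
  obtain ⟨pl, t, hpath, hagree⟩ := G.exists_isCompletePath_agrees hG (f := answer α)
    fun a _ => answer_mem_allowed (fun x hx => allowed_mono (R_SR_subset S) (hαval x hx).2) a
  obtain ⟨hrec, hempty⟩ := hsolve pl t hpath (consistentE_of_forall_eq hagree)
  have hterm : G.termSet t = ∅ := by
    refine Finset.eq_empty_of_forall_notMem fun r hr => ?_
    obtain ⟨r', hr', hr'α, hlen⟩ := exists_mem_R_SR_len_restrict_eq_zero hα
      (G.termSet_subset hG hpath.2.1 hpath.2.2 hr) (liftK_subset_of_agrees (hrec r hr) hagree)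
    exact h0 _ (restrict_mem_restrict hr' hr'α) hlen
  have hB := isNodeCover_restrict_of_refuted (fun r hr => hwf r (R_SR_subset S hr)) hα hagree
    fun r hr => hempty hterm r (R_SR_subset S hr)
  calc _ ≤ _ := hB.beta_le
    _ ≤ ((G.pathEqs pl).filter fun x => x.2 = none).card :=
      (Finset.card_le_card Finset.inter_subset_left).trans Finset.card_image_le
    _ ≤ (G.pathEqs pl).card := Finset.card_filter_le _ _
    _ ≤ pl.length := G.card_pathEqs_le pl
    _ ≤ G.depth := DGraph.length_le_depth hG.2.1 hG.2.2.1 hpath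

end LowerBounds

section UpperBound

variable (S : Finset Rule)

def realizedRules (α : Finset (ℕ × Option ℕ)) : Finset Rule :=
  S.filter fun r => liftK r.K ⊆ α

def Stops (α : Finset (ℕ × Option ℕ)) : Prop :=
  restrict (R_SR S) α = ∅ ∨ ∃ r ∈ restrict (R_SR S) α, r.len = 0

def minCover (α : Finset (ℕ × Option ℕ)) : Finset ℕ :=
  (exists_isNodeCover_card_eq_beta (Splus (restrict (R_SR S) α))).choose

def askAll (g : Finset (ℕ × Option ℕ) → DTree) :
    List ℕ → Finset (ℕ × Option ℕ) → DTree
  | [], α => g α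
  | a :: L, α => .node a fun l => askAll g L (insert (a, l) α)

/-- `f` is the number of rounds left. -/
def strategy : ℕ → Finset (ℕ × Option ℕ) → DTree
  | 0, α => .leaf (realizedRules S α)
  | f + 1, α =>
    if Stops S α then .leaf (realizedRules S α) else askAll (strategy f) (minCover S α).toList α

/-- The invariant within a round of `strategy` that started with `d((R_SR S)_α) ≤ f + 1`. -/
def LongRulesHit (f : ℕ) (L : List ℕ) (α : Finset (ℕ × Option ℕ)) : Prop :=
  ∀ r ∈ R_SR S, ConsistentE (liftK r.K ∪ α) → f < (r.restrict α).len →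
    (r.restrict α).len = f + 1 ∧ ∃ b ∈ L, b ∈ (r.restrict α).attrs

variable {S}

lemma dPar_restrict_le_iff {T : Finset Rule} {α : Finset (ℕ × Option ℕ)} {f : ℕ} :
    dPar (restrict T α) ≤ f ↔
      ∀ r ∈ T, ConsistentE (liftK r.K ∪ α) → (r.restrict α).len ≤ f := by
  simp only [dPar, Finset.sup_le_iff, mem_restrict]
  exact ⟨fun h r hr hc => h _ ⟨r, hr, hc, rfl⟩,
    by rintro h _ ⟨r, hr, hc, rfl⟩; exact h r hr hc⟩

lemma minCover_spec (α : Finset (ℕ × Option ℕ)) :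
    IsNodeCover (Splus (restrict (R_SR S) α)) (minCover S α) ∧
      (minCover S α).card = beta (Splus (restrict (R_SR S) α)) :=
  (exists_isNodeCover_card_eq_beta _).choose_spec

lemma minCover_subset_attrs (α : Finset (ℕ × Option ℕ)) : minCover S α ⊆ attrs S :=
  (minCover_spec α).1.1.trans <| (attrs_mono (Splus_subset _)).trans <|
    (attrs_restrict_subset _ _).trans (attrs_mono (R_SR_subset S))

lemma minCover_card_le (hwf : ∀ r ∈ S, r.WF) {α : Finset (ℕ × Option ℕ)}
    (h : ¬ Stops S α) : (minCover S α).card ≤ beta_ESRplus (R_SR S) := by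
  simp only [Stops, not_or, not_exists, not_and] at h
  obtain ⟨r₀, hr₀⟩ := Finset.nonempty_iff_ne_empty.2 h.1
  obtain ⟨r, -, hrα, -⟩ := mem_restrict.1 hr₀
  rw [(minCover_spec α).2]
  exact betaPlus_le_beta_ESRplus (fun r hr => (hwf r (R_SR_subset S hr)).consistentE_liftK)
    (hrα.mono Finset.subset_union_right) h.2

lemma longRulesHit_minCover {f : ℕ} {α : Finset (ℕ × Option ℕ)}
    (h : dPar (restrict (R_SR S) α) ≤ f + 1) : LongRulesHit S f (minCover S α).toList α := by
  intro r hr hrα hlt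
  have hmem := restrict_mem_restrict hr hrα
  have hlen : (r.restrict α).len = f + 1 := le_antisymm (Finset.le_sup hmem |>.trans h) hlt
  have hplus : r.restrict α ∈ Splus (restrict (R_SR S) α) :=
    Finset.mem_filter.2 ⟨hmem, le_antisymm (Finset.le_sup hmem) (hlen ▸ h)⟩
  have hpos : 0 < (r.restrict α).K.card := by rw [← Rule.len, hlen]; exact Nat.succ_pos f
  obtain ⟨b, hb⟩ := (minCover_spec α).1.2 _ hplus ((Finset.card_pos.1 hpos).image _)
  exact ⟨hlen, b, Finset.mem_toList.2 (Finset.mem_inter.1 hb).2, (Finset.mem_inter.1 hb).1⟩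

lemma LongRulesHit.dPar_le {f : ℕ} {α : Finset (ℕ × Option ℕ)}
    (h : LongRulesHit S f [] α) : dPar (restrict (R_SR S) α) ≤ f :=
  dPar_restrict_le_iff.2 fun r hr hrα => not_lt.1 fun hlt => by simpa using (h r hr hrα hlt).2

/-- Asking `a` either shortens a rule of length `f + 1`, or, if `a` is one of its attributes,
refutes it. -/
lemma LongRulesHit.ask {f a : ℕ} {L : List ℕ} {α : Finset (ℕ × Option ℕ)}
    (h : LongRulesHit S f (a :: L) α) (l : Option ℕ) :
    LongRulesHit S f L (insert (a, l) α) := by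
  intro r hr hrα hlt
  have hsub : α ⊆ insert (a, l) α := Finset.subset_insert _ _
  have hK := r.restrict_K_anti hsub
  have hle : (r.restrict (insert (a, l) α)).len ≤ (r.restrict α).len := Finset.card_le_card hK
  obtain ⟨hlen, b, hb, hbr⟩ :=
    h r hr (hrα.mono (Finset.union_subset_union_right hsub)) (hlt.trans_le hle)
  have hKeq : (r.restrict (insert (a, l) α)).K = (r.restrict α).K :=
    Finset.eq_of_subset_of_card_le hK (by unfold Rule.len at hlen hlt; omega)
  rw [Rule.len, hKeq, Rule.attrs, hKeq]
  refine ⟨hlen, b, (List.mem_cons.1 hb).resolve_left ?_, hbr⟩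
  rintro rfl
  obtain ⟨δ, hδ⟩ := Rule.mem_attrs.1 hbr
  have hδ' := hδ
  rw [← hKeq, Rule.mem_restrict_K] at hδ'
  have : some δ = l :=
    hrα _ (Finset.mem_union_left _ (some_mem_liftK.2 (r.restrict_K_subset α hδ)))
      _ (Finset.mem_union_right _ (Finset.mem_insert_self _ _)) rfl
  exact hδ'.2 (this ▸ Finset.mem_insert_self _ _)

lemma stops_of_dPar_eq_zero {α : Finset (ℕ × Option ℕ)}
    (h : dPar (restrict (R_SR S) α) = 0) :
    Stops S α := by
  rcases (restrict (R_SR S) α).eq_empty_or_nonempty with hempty | ⟨r, hr⟩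
  · exact .inl hempty
  · exact .inr ⟨r, hr, Nat.eq_zero_of_le_zero (h ▸ Finset.le_sup hr)⟩

lemma solvesFrom_leaf_realizedRules {α : Finset (ℕ × Option ℕ)} (h : Stops S α) :
    (DTree.leaf (realizedRules S α)).SolvesFrom S α := by
  intro hα
  refine ⟨fun r hr => (Finset.mem_filter.1 hr).2, fun hZ r hrS hrα => ?_⟩
  rcases h with hempty | ⟨_, hr₀, hlen⟩
  · obtain ⟨r', hr', hsub⟩ := exists_mem_R_SR_K_subset hrS
    have hr'α := hrα.mono (Finset.union_subset_union_left (liftK_mono hsub))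
    simpa [hempty] using restrict_mem_restrict hr' hr'α
  · obtain ⟨r', hr', -, rfl⟩ := mem_restrict.1 hr₀
    have : r' ∈ realizedRules S α :=
      Finset.mem_filter.2 ⟨R_SR_subset S hr', Rule.len_restrict_eq_zero_iff.1 hlen⟩
    simp [hZ] at this

lemma solvesFrom_askAll {f : ℕ} {g : Finset (ℕ × Option ℕ) → DTree}
    (hg : ∀ α, dPar (restrict (R_SR S) α) ≤ f → (g α).SolvesFrom S α) (L : List ℕ)
    {α : Finset (ℕ × Option ℕ)} (h : LongRulesHit S f L α) :
    (askAll g L α).SolvesFrom S α := by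
  induction L generalizing α with
  | nil => exact hg α h.dPar_le
  | cons a L ih => exact fun l _ => ih (h.ask l)

lemma solvesFrom_strategy (f : ℕ) {α : Finset (ℕ × Option ℕ)}
    (h : dPar (restrict (R_SR S) α) ≤ f) : (strategy S f α).SolvesFrom S α := by
  induction f generalizing α with
  | zero => exact solvesFrom_leaf_realizedRules (stops_of_dPar_eq_zero (Nat.le_zero.1 h))
  | succ f ih =>
    rw [strategy]
    split_ifs with hstop
    · exact solvesFrom_leaf_realizedRules hstop
    · exact solvesFrom_askAll (fun β hβ => ih hβ) _ (longRulesHit_minCover h)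

lemma isOver_askAll {g : Finset (ℕ × Option ℕ) → DTree} (hg : ∀ α, (g α).IsOver S)
    (L : List ℕ) (hL : ∀ a ∈ L, a ∈ attrs S) (α : Finset (ℕ × Option ℕ)) :
    (askAll g L α).IsOver S := by
  induction L generalizing α with
  | nil => exact hg α
  | cons a L ih =>
    exact ⟨hL a List.mem_cons_self,
      fun l => ih (fun b hb => hL b (List.mem_cons_of_mem a hb)) _⟩

lemma isOver_strategy (f : ℕ) (α : Finset (ℕ × Option ℕ)) : (strategy S f α).IsOver S := by
  induction f generalizing α with
  | zero => exact Finset.filter_subset _ _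
  | succ f ih =>
    rw [strategy]
    split_ifs
    · exact Finset.filter_subset _ _
    · exact isOver_askAll ih _ (fun a ha => minCover_subset_attrs α (Finset.mem_toList.1 ha)) α

lemma height_askAll_le {g : Finset (ℕ × Option ℕ) → DTree} {H : ℕ}
    (hg : ∀ α, (g α).height S ≤ H) (L : List ℕ) (α : Finset (ℕ × Option ℕ)) :
    (askAll g L α).height S ≤ L.length + H := by
  induction L generalizing α with
  | nil => simpa [askAll] using hg α
  | cons a L ih =>
    have := Finset.sup_le (s := allowed S true a) fun l _ => ih (insert (a, l) α)
    simp only [askAll, DTree.height, List.length_cons]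
    omega

lemma height_strategy_le (hwf : ∀ r ∈ S, r.WF) (f : ℕ) (α : Finset (ℕ × Option ℕ)) :
    (strategy S f α).height S ≤ f * beta_ESRplus (R_SR S) := by
  induction f generalizing α with
  | zero => exact Nat.zero_le _
  | succ f ih =>
    rw [strategy]
    split_ifs with hstop
    · exact Nat.zero_le _
    · have := height_askAll_le ih (minCover S α).toList α
      rw [Finset.length_toList] at this
      have := minCover_card_le hwf hstop
      rw [Nat.succ_mul]
      omega

theorem exists_treeSolvesESR_depth_le (hwf : ∀ r ∈ S, r.WF) :
    ∃ G, TreeSolvesESR S G ∧ G.depth ≤ dPar (R_SR S) * beta_ESRplus (R_SR S) := by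
  have hstart : dPar (restrict (R_SR S) ∅) ≤ dPar (R_SR S) :=
    dPar_restrict_le_iff.2 fun r hr _ => r.len_restrict_empty ▸ Finset.le_sup hr
  set t := strategy S (dPar (R_SR S)) ∅
  exact ⟨t.toDGraph S, DTree.treeSolvesESR_toDGraph (isOver_strategy _ _)
    (solvesFrom_strategy _ hstart), DTree.depth_toDGraph_le.trans (height_strategy_le hwf _ _)⟩

end UpperBound

theorem statement_19_general (S : Finset Rule) (hwf : ∀ r ∈ S, r.WF) :
    max (dPar (R_SR S)) (beta_ESR (R_SR S)) ≤ h_ESR S ∧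
    h_ESR S ≤ dPar (R_SR S) * beta_ESRplus (R_SR S) := by
  obtain ⟨G, hG, hdepth⟩ := exists_treeSolvesESR_depth_le hwf
  obtain ⟨G₀, hG₀, hG₀depth⟩ :=
    Nat.sInf_mem (s := {m | ∃ G : DGraph, TreeSolvesESR S G ∧ G.depth = m}) ⟨_, G, hG, rfl⟩
  have hle : h_ESR S ≤ G.depth := Nat.sInf_le ⟨G, hG, rfl⟩
  refine ⟨?_, hle.trans hdepth⟩
  rw [h_ESR, ← hG₀depth]
  exact max_le (dPar_R_SR_le_depth hwf hG₀) (beta_ESR_R_SR_le_depth hwf hG₀)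

/-- Theorem 4(f): with S′ = R_SR(S),
max{d(S′), β_ESR(S′)} ≤ h_ESR(S) ≤ d(S′)·β_ESR⁺(S′). -/
theorem statement_19 (S : Finset Rule) (hS : S.Nonempty) (hwf : ∀ r ∈ S, r.WF)
    (hn : 0 < nPar S) :
    max (dPar (R_SR S)) (beta_ESR (R_SR S)) ≤ h_ESR S ∧
    h_ESR S ≤ dPar (R_SR S) * beta_ESRplus (R_SR S) :=
  statement_19_general S hwf

end DRS

end
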